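/- arXiv:1701.07211 — 2 statements merged into one kernel-verified Lean document; each statement's English description precedes it below -/
import Mathlib

section
/- Let r₁, r₂, r₃ > 0 with r₁² + r₂² + r₃² = 1, and set a₁ = a₂ = −r₁²/(r₂²+r₃²), b₁ = r₁r₃/(r₂(r₂²+r₃²)), b₂ = −r₁r₂/(r₃(r₂²+r₃²)). Then the map r : ℝ² → ℂ³ defined by r(x,y) = (r₁ e^{2πi x}, r₂ e^{2πi(a₁x+b₁y)}, r₃ e^{2πi(a₂x+b₂y)}) satisfies, for all (x,y): ⟨r,r⟩ = 1, ⟨r_x,r⟩ = ⟨r_y,r⟩ = ⟨r_x,r_y⟩ = 0, and ⟨r_x,r_x⟩ = ⟨r_y,r_y⟩ = 4π²r₁²/(r₂²+r₃²). -/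
open Complex Real

/-- Partial derivative in the first variable. -/
noncomputable def pdx {E : Type*} [NormedAddCommGroup E] [NormedSpace ℝ E]
    (f : ℝ → ℝ → E) (x y : ℝ) : E := deriv (fun x' => f x' y) x

/-- Partial derivative in the second variable. -/
noncomputable def pdy {E : Type*} [NormedAddCommGroup E] [NormedSpace ℝ E]
    (f : ℝ → ℝ → E) (x y : ℝ) : E := deriv (fun y' => f x y') y

/-- Hermitian inner product ⟨a,b⟩ = ∑ aᵢ conj(bᵢ) on ℂ³. -/
noncomputable def herm (a b : Fin 3 → ℂ) : ℂ := ∑ i, a i * starRingEnd ℂ (b i)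

/-!
Each coordinate of `r`, `r_x` and `r_y` is a constant times a real amplitude times the same
unit-modulus phase `exp (2πi (p_k x + q_k y))`, so in every Hermitian product the phases cancel and
what survives is a weighted sum of the `r_k²`, with weights built from the frequency vectors
`p = (1, a₁, a₂)` and `q = (0, b₁, b₂)`. The six identities thus become algebraic relations
among `r₁, r₂, r₃`.
-/

open ComplexConjugate

lemma herm_mul_of_norm_eq_one (u v e : Fin 3 → ℂ) (he : ∀ k, ‖e k‖ = 1) :
    herm (u * e) (v * e) = herm u v := by
  refine Finset.sum_congr rfl fun k _ => ?_
  have hk : e k * conj (e k) = 1 := by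
    rw [mul_conj, normSq_eq_norm_sq, he k]; norm_num
  simp only [Pi.mul_apply, map_mul]
  linear_combination u k * conj (v k) * hk

lemma herm_smul_left (c : ℂ) (u v : Fin 3 → ℂ) : herm (c • u) v = c * herm u v := by
  simp only [herm, Pi.smul_apply, smul_eq_mul, Finset.mul_sum, mul_assoc]

lemma herm_smul_right (c : ℂ) (u v : Fin 3 → ℂ) : herm u (c • v) = conj c * herm u v := by
  simp only [herm, Pi.smul_apply, smul_eq_mul, map_mul, Finset.mul_sum]
  exact Finset.sum_congr rfl fun k _ => by ring

lemma herm_ofReal (u v : Fin 3 → ℝ) :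
    herm (fun k => (u k : ℂ)) (fun k => (v k : ℂ)) = ((u ⬝ᵥ v : ℝ) : ℂ) := by
  simp [herm, dotProduct]

lemma conj_two_pi_I_mul (z : ℂ) :
    conj (2 * π * I) * (2 * π * I * z) = ((4 * π ^ 2 : ℝ) : ℂ) * z := by
  rw [← mul_assoc, mul_comm (conj _), mul_conj, normSq_apply]
  congr 1
  simp only [mul_re, re_ofNat, ofReal_re, im_ofNat, ofReal_im, I_re, I_im, mul_im, mul_zero,
    sub_zero, zero_mul, add_zero, mul_one, sub_self, zero_add, ofReal_mul, ofReal_ofNat, ofReal_pow]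
  ring

section TorusLift

variable (ρ p q : Fin 3 → ℝ) (x y : ℝ)

noncomputable def phase : Fin 3 → ℂ := fun k => exp (2 * π * (p k * x + q k * y) * I)

noncomputable def torusLift : Fin 3 → ℂ := (fun k => (ρ k : ℂ)) * phase p q x y

lemma norm_phase (k : Fin 3) : ‖phase p q x y k‖ = 1 := by
  simpa [phase] using norm_exp_ofReal_mul_I (2 * π * (p k * x + q k * y))

lemma phase_swap : phase q p y x = phase p q x y := by
  funext k; simp only [phase, add_comm]

lemma hasDerivAt_phase_apply (k : Fin 3) :
    HasDerivAt (fun x' => phase p q x' y k) (2 * π * I * p k * phase p q x y k) x := by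
  have hθ : HasDerivAt (fun x' : ℝ => 2 * π * (p k * (x' : ℂ) + q k * y) * I) (2 * π * p k * I) x := by
    simpa using ((((hasDerivAt_id x).ofReal_comp.const_mul (p k : ℂ)).add_const
      ((q k : ℂ) * y)).const_mul (2 * π : ℂ)).mul_const I
  exact hθ.cexp.congr_deriv (by unfold phase; ring)

lemma pdx_torusLift :
    pdx (torusLift ρ p q) x y = (2 * π * I) • (fun k => ((p * ρ) k : ℂ)) * phase p q x y := by
  refine (hasDerivAt_pi.2 fun k =>
    (hasDerivAt_phase_apply p q x y k).const_mul (ρ k : ℂ)).deriv.trans ?_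
  funext k
  simp only [Pi.mul_apply, Pi.smul_apply, smul_eq_mul]
  push_cast
  ring

lemma pdy_torusLift :
    pdy (torusLift ρ p q) x y = (2 * π * I) • (fun k => ((q * ρ) k : ℂ)) * phase p q x y := by
  have hswap : pdy (torusLift ρ p q) x y = pdx (torusLift ρ q p) y x := by
    simp only [pdx, pdy, torusLift, phase_swap]
  rw [hswap, pdx_torusLift, phase_swap]

end TorusLift

lemma vec3_mul {α : Type*} [Mul α] (a₀ a₁ a₂ b₀ b₁ b₂ : α) :
    ![a₀, a₁, a₂] * ![b₀, b₁, b₂] = ![a₀ * b₀, a₁ * b₁, a₂ * b₂] := by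
  ext i; fin_cases i <;> rfl

section HomogeneousTorus

variable {r1 r2 r3 a1 a2 b1 b2 : ℝ}

lemma homogeneousTorus_horizontal_x (hs : r2 ^ 2 + r3 ^ 2 ≠ 0)
    (ha1 : a1 = -r1^2 / (r2^2 + r3^2)) (ha2 : a2 = -r1^2 / (r2^2 + r3^2)) :
    (![1, a1, a2] * ![r1, r2, r3]) ⬝ᵥ ![r1, r2, r3] = 0 := by
  rw [vec3_mul, Matrix.vec3_dotProduct', ha1, ha2]
  field_simp
  ring

lemma homogeneousTorus_horizontal_y (h2 : r2 ≠ 0) (h3 : r3 ≠ 0)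
    (hb1 : b1 = r1 * r3 / (r2 * (r2^2 + r3^2))) (hb2 : b2 = -(r1 * r2) / (r3 * (r2^2 + r3^2))) :
    (![0, b1, b2] * ![r1, r2, r3]) ⬝ᵥ ![r1, r2, r3] = 0 := by
  rw [vec3_mul, Matrix.vec3_dotProduct', hb1, hb2]
  field_simp
  ring

lemma homogeneousTorus_orthogonal (ha : a1 = a2)
    (hy : (![0, b1, b2] * ![r1, r2, r3]) ⬝ᵥ ![r1, r2, r3] = 0) :
    (![1, a1, a2] * ![r1, r2, r3]) ⬝ᵥ (![0, b1, b2] * ![r1, r2, r3]) = 0 := by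
  rw [vec3_mul, Matrix.vec3_dotProduct'] at hy
  rw [vec3_mul, vec3_mul, Matrix.vec3_dotProduct']
  linear_combination a1 * hy - b2 * r3 * r3 * ha

lemma homogeneousTorus_conformal_x (hsum : r1^2 + r2^2 + r3^2 = 1) (hs : r2 ^ 2 + r3 ^ 2 ≠ 0)
    (ha1 : a1 = -r1^2 / (r2^2 + r3^2)) (ha2 : a2 = -r1^2 / (r2^2 + r3^2)) :
    (![1, a1, a2] * ![r1, r2, r3]) ⬝ᵥ (![1, a1, a2] * ![r1, r2, r3]) =
      r1 ^ 2 / (r2 ^ 2 + r3 ^ 2) := by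
  rw [vec3_mul, Matrix.vec3_dotProduct', ha1, ha2]
  field_simp
  linear_combination r1 ^ 2 * (r2 ^ 2 + r3 ^ 2) * hsum

lemma homogeneousTorus_conformal_y (h2 : r2 ≠ 0) (h3 : r3 ≠ 0)
    (hb1 : b1 = r1 * r3 / (r2 * (r2^2 + r3^2))) (hb2 : b2 = -(r1 * r2) / (r3 * (r2^2 + r3^2))) :
    (![0, b1, b2] * ![r1, r2, r3]) ⬝ᵥ (![0, b1, b2] * ![r1, r2, r3]) =
      r1 ^ 2 / (r2 ^ 2 + r3 ^ 2) := by
  rw [vec3_mul, Matrix.vec3_dotProduct', hb1, hb2]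
  field_simp
  ring

end HomogeneousTorus

theorem homogeneous_torus_lift_is_horizontal_conformal_general
    (r1 r2 r3 : ℝ) (h2 : 0 < r2) (h3 : 0 < r3)
    (hsum : r1^2 + r2^2 + r3^2 = 1)
    (a1 a2 b1 b2 : ℝ)
    (ha1 : a1 = -r1^2 / (r2^2 + r3^2))
    (ha2 : a2 = -r1^2 / (r2^2 + r3^2))
    (hb1 : b1 = r1 * r3 / (r2 * (r2^2 + r3^2)))
    (hb2 : b2 = -(r1 * r2) / (r3 * (r2^2 + r3^2)))
    (r : ℝ → ℝ → Fin 3 → ℂ)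
    (hr : ∀ x y, r x y =
      ![(r1 : ℂ) * Complex.exp (2 * Real.pi * x * Complex.I),
        (r2 : ℂ) * Complex.exp (2 * Real.pi * (a1 * x + b1 * y) * Complex.I),
        (r3 : ℂ) * Complex.exp (2 * Real.pi * (a2 * x + b2 * y) * Complex.I)]) :
    ∀ x y,
      herm (r x y) (r x y) = 1 ∧
      herm (pdx r x y) (r x y) = 0 ∧
      herm (pdy r x y) (r x y) = 0 ∧
      herm (pdx r x y) (pdy r x y) = 0 ∧
      herm (pdx r x y) (pdx r x y) =
        ((4 * Real.pi^2 * r1^2 / (r2^2 + r3^2) : ℝ) : ℂ) ∧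
      herm (pdy r x y) (pdy r x y) =
        ((4 * Real.pi^2 * r1^2 / (r2^2 + r3^2) : ℝ) : ℂ) := by
  have hr_eq : r = torusLift ![r1, r2, r3] ![1, a1, a2] ![0, b1, b2] := by
    funext x y k
    fin_cases k <;> simp [hr, torusLift, phase]
  subst hr_eq
  intro x y
  have hs : r2 ^ 2 + r3 ^ 2 ≠ 0 := by positivity
  have hρ : ![r1, r2, r3] ⬝ᵥ ![r1, r2, r3] = 1 := by
    rw [Matrix.vec3_dotProduct']; linear_combination hsum
  have hy := homogeneousTorus_horizontal_y h2.ne' h3.ne' hb1 hb2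
  simp only [pdx_torusLift, pdy_torusLift, torusLift, herm_mul_of_norm_eq_one _ _ _ (norm_phase _ _ _ _),
    herm_smul_left, herm_smul_right, herm_ofReal, conj_two_pi_I_mul]
  refine ⟨?_, ?_, ?_, ?_, ?_, ?_⟩
  · rw [hρ, ofReal_one]
  · rw [homogeneousTorus_horizontal_x hs ha1 ha2, ofReal_zero, mul_zero]
  · rw [hy, ofReal_zero, mul_zero]
  · rw [homogeneousTorus_orthogonal (ha1.trans ha2.symm) hy, ofReal_zero, mul_zero]
  · rw [homogeneousTorus_conformal_x hsum hs ha1 ha2, ← ofReal_mul, mul_div_assoc]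
  · rw [homogeneousTorus_conformal_y h2.ne' h3.ne' hb1 hb2, ← ofReal_mul, mul_div_assoc]

/-- The map `r(x,y) = (r₁e^{2πix}, r₂e^{2πi(a₁x+b₁y)}, r₃e^{2πi(a₂x+b₂y)})` is a
horizontal conformal lift of the homogeneous torus `Σ_{r₁,r₂,r₃}`:
`⟨r,r⟩ = 1`, `⟨r_x,r⟩ = ⟨r_y,r⟩ = ⟨r_x,r_y⟩ = 0`, and
`⟨r_x,r_x⟩ = ⟨r_y,r_y⟩ = 4π²r₁²/(r₂²+r₃²)`. -/
theorem homogeneous_torus_lift_is_horizontal_conformal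
    (r1 r2 r3 : ℝ) (h1 : 0 < r1) (h2 : 0 < r2) (h3 : 0 < r3)
    (hsum : r1^2 + r2^2 + r3^2 = 1)
    (a1 a2 b1 b2 : ℝ)
    (ha1 : a1 = -r1^2 / (r2^2 + r3^2))
    (ha2 : a2 = -r1^2 / (r2^2 + r3^2))
    (hb1 : b1 = r1 * r3 / (r2 * (r2^2 + r3^2)))
    (hb2 : b2 = -(r1 * r2) / (r3 * (r2^2 + r3^2)))
    (r : ℝ → ℝ → Fin 3 → ℂ)
    (hr : ∀ x y, r x y =
      ![(r1 : ℂ) * Complex.exp (2 * Real.pi * x * Complex.I),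
        (r2 : ℂ) * Complex.exp (2 * Real.pi * (a1 * x + b1 * y) * Complex.I),
        (r3 : ℂ) * Complex.exp (2 * Real.pi * (a2 * x + b2 * y) * Complex.I)]) :
    ∀ x y,
      herm (r x y) (r x y) = 1 ∧
      herm (pdx r x y) (r x y) = 0 ∧
      herm (pdy r x y) (r x y) = 0 ∧
      herm (pdx r x y) (pdy r x y) = 0 ∧
      herm (pdx r x y) (pdx r x y) =
        ((4 * Real.pi^2 * r1^2 / (r2^2 + r3^2) : ℝ) : ℂ) ∧
      herm (pdy r x y) (pdy r x y) =
        ((4 * Real.pi^2 * r1^2 / (r2^2 + r3^2) : ℝ) : ℂ) :=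
  homogeneous_torus_lift_is_horizontal_conformal_general r1 r2 r3 h2 h3 hsum a1 a2 b1 b2 ha1 ha2 hb1
    hb2 r hr
end

section
/- Let m ≥ n > 0 > k be integers, and let r(x,y) = (u₁(x)e^{2πimy}, u₂(x)e^{2πiny}, u₃(x)e^{2πiky}) with u₁(x) = sin(x)√(k/(k−m)), u₂(x) = cos(x)√(k/(k−n)), u₃(x) = √(n cos²x/(n−k) + m sin²x/(m−k)). Then for every (x,y) with r_x(x,y) ≠ 0 and r_y(x,y) ≠ 0, the determinant of the 3×3 complex matrix with rows r, r_x/|r_x|, r_y/|r_y| equals i·e^{2πi(m+n+k)y}. Consequently the Lagrangian angle of Σ_{m,n,k} satisfies e^{iβ} = i·e^{2πi(m+n+k)y}. -/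
/-!
Write `r = (u_j(x) e^{2πiℓ_j y})` with `ℓ = (m, n, k)`. All phases have modulus one, so the
determinant is `i · ∏ e^{2πiℓ_j y}` times the real determinant of `u, u'/|u'|, ℓu/|ℓu|`.
Differentiating `|u|² = 1` and `∑ ℓ_j u_j² = 0` shows that `u`, `u'` and `ℓu` are pairwise
orthogonal, so this real frame is orthonormal and its determinant is `±1`; an explicit
computation shows that `det (u, u', ℓu) ≥ 0`.
-/

open Complex Real

/-- Hermitian norm |a| = √⟨a,a⟩. -/
noncomputable def hnorm (a : Fin 3 → ℂ) : ℝ := Real.sqrt (herm a a).re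

open Matrix

theorem sum_mul_mul_deriv_eq_zero_of_sum_mul_sq_const {ι : Type*} [Fintype ι]
    {u : ι → ℝ → ℝ} {u' : ι → ℝ} {x : ℝ} (hu : ∀ i, HasDerivAt (u i) (u' i) x)
    (c : ι → ℝ) {C : ℝ} (hC : ∀ t, ∑ i, c i * u i t ^ 2 = C) :
    ∑ i, c i * u i x * u' i = 0 := by
  have hderiv : HasDerivAt (fun t => ∑ i, c i * u i t ^ 2) (∑ i, c i * (2 * u i x * u' i)) x :=
    HasDerivAt.fun_sum fun i _ => by simpa using ((hu i).fun_pow 2).const_mul (c i)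
  have hconst : HasDerivAt (fun t => ∑ i, c i * u i t ^ 2) 0 x := by
    simpa only [hC] using hasDerivAt_const x C
  have h := hderiv.unique hconst
  rw [← mul_right_inj' (two_ne_zero (α := ℝ)), mul_zero, ← h, Finset.mul_sum]
  exact Finset.sum_congr rfl fun i _ => by ring

theorem det_sq_of_dotProduct_eq_zero {u v w : Fin 3 → ℝ} (huv : u ⬝ᵥ v = 0)
    (huw : u ⬝ᵥ w = 0) (hvw : v ⬝ᵥ w = 0) :
    (of ![u, v, w]).det ^ 2 = (u ⬝ᵥ u) * (v ⬝ᵥ v) * (w ⬝ᵥ w) := by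
  have hgram : of ![u, v, w] * (of ![u, v, w])ᵀ = diagonal ![u ⬝ᵥ u, v ⬝ᵥ v, w ⬝ᵥ w] := by
    have hrow : ∀ i, of ![u, v, w] i = ![u, v, w] i := fun _ => rfl
    ext i j
    fin_cases i <;> fin_cases j <;>
      simp [mul_apply', hrow, huv, huw, hvw, dotProduct_comm v u, dotProduct_comm w u,
        dotProduct_comm w v]
  have h := det_mul (of ![u, v, w]) (of ![u, v, w])ᵀ
  rw [det_transpose, hgram, det_diagonal, Fin.prod_univ_three] at h
  rw [sq, ← h]
  rfl

theorem det_orthonormalized_eq_one {u v w : Fin 3 → ℝ} (hu : u ⬝ᵥ u = 1) (huv : u ⬝ᵥ v = 0)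
    (huw : u ⬝ᵥ w = 0) (hvw : v ⬝ᵥ w = 0) (hv : v ≠ 0) (hw : w ≠ 0)
    (hdet : 0 ≤ (of ![u, v, w]).det) :
    (of ![u, (√(v ⬝ᵥ v))⁻¹ • v, (√(w ⬝ᵥ w))⁻¹ • w]).det = 1 := by
  have hv' : 0 < √(v ⬝ᵥ v) :=
    Real.sqrt_pos.mpr (by simpa using dotProduct_self_star_pos_iff.mpr hv)
  have hw' : 0 < √(w ⬝ᵥ w) :=
    Real.sqrt_pos.mpr (by simpa using dotProduct_self_star_pos_iff.mpr hw)
  have hscale : ∀ a b : ℝ, (of ![u, a • v, b • w]).det = a * b * (of ![u, v, w]).det := by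
    intro a b
    simp only [det_fin_three, of_apply, cons_val', cons_val_zero, cons_val_one, cons_val,
      cons_val_fin_one, Pi.smul_apply, smul_eq_mul]
    ring
  have habs : (of ![u, v, w]).det = √(v ⬝ᵥ v) * √(w ⬝ᵥ w) := by
    rw [← Real.sqrt_mul (by simpa using dotProduct_self_star_nonneg v), ← Real.sqrt_sq hdet,
      det_sq_of_dotProduct_eq_zero huv huw hvw, hu, one_mul]
  rw [hscale, habs]
  field_simp

theorem herm_ofReal_mul_self (v : Fin 3 → ℝ) {e : Fin 3 → ℂ} (he : ∀ i, ‖e i‖ = 1) :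
    herm (fun i => (v i : ℂ) * e i) (fun i => (v i : ℂ) * e i) = ((v ⬝ᵥ v : ℝ) : ℂ) := by
  have hterm : ∀ i,
      (v i : ℂ) * e i * starRingEnd ℂ ((v i : ℂ) * e i) = ((v i * v i : ℝ) : ℂ) := by
    intro i
    rw [map_mul, Complex.conj_ofReal, mul_mul_mul_comm, Complex.mul_conj,
      Complex.normSq_eq_norm_sq, he i]
    push_cast
    ring
  simp only [herm, hterm, dotProduct, Complex.ofReal_sum]

theorem hnorm_ofReal_mul (v : Fin 3 → ℝ) {e : Fin 3 → ℂ} (he : ∀ i, ‖e i‖ = 1) :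
    hnorm (fun i => (v i : ℂ) * e i) = √(v ⬝ᵥ v) := by
  rw [hnorm, herm_ofReal_mul_self v he, Complex.ofReal_re]

theorem inv_hnorm_smul_ofReal_mul (v : Fin 3 → ℝ) {e : Fin 3 → ℂ} (he : ∀ i, ‖e i‖ = 1) :
    (hnorm (fun i => (v i : ℂ) * e i) : ℂ)⁻¹ • (fun i => (v i : ℂ) * e i) =
      fun i => (((√(v ⬝ᵥ v))⁻¹ • v) i : ℂ) * e i := by
  ext i
  simp [hnorm_ofReal_mul v he, mul_assoc]

theorem det_ofReal_mul_rows (a b c : Fin 3 → ℝ) (e : Fin 3 → ℂ) (z : ℂ) :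
    (of ![fun i => (a i : ℂ) * e i, fun i => (b i : ℂ) * e i,
      fun i => (c i : ℂ) * (z * e i)]).det =
      z * (∏ i, e i) * (of ![a, b, c]).det := by
  simp only [det_fin_three, Fin.prod_univ_three, of_apply, cons_val', cons_val_zero, cons_val_one,
    cons_val, cons_val_fin_one]
  push_cast
  ring

noncomputable def orbitSurface (ℓ : Fin 3 → ℝ) (u : Fin 3 → ℝ → ℝ) (x y : ℝ) : Fin 3 → ℂ :=
  fun i => (u i x : ℂ) * Complex.exp (2 * Real.pi * ℓ i * y * Complex.I)

theorem norm_exp_two_pi_mul_I (a y : ℝ) :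
    ‖Complex.exp (2 * Real.pi * a * y * Complex.I)‖ = 1 := by
  simpa using Complex.norm_exp_ofReal_mul_I (2 * Real.pi * a * y)

theorem pdx_orbitSurface (ℓ : Fin 3 → ℝ) {u : Fin 3 → ℝ → ℝ} {u' : Fin 3 → ℝ} {x : ℝ}
    (hu : ∀ i, HasDerivAt (u i) (u' i) x) (y : ℝ) :
    pdx (orbitSurface ℓ u) x y =
      fun i => (u' i : ℂ) * Complex.exp (2 * Real.pi * ℓ i * y * Complex.I) :=
  (hasDerivAt_pi.mpr fun i => (hu i).ofReal_comp.mul_const _).deriv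

theorem pdy_orbitSurface (ℓ : Fin 3 → ℝ) (u : Fin 3 → ℝ → ℝ) (x y : ℝ) :
    pdy (orbitSurface ℓ u) x y = fun i =>
      ((2 * Real.pi * ℓ i * u i x : ℝ) : ℂ) *
        (Complex.I * Complex.exp (2 * Real.pi * ℓ i * y * Complex.I)) := by
  refine (hasDerivAt_pi.mpr fun i => ?_).deriv
  have hlin : HasDerivAt (fun t : ℝ => 2 * Real.pi * ℓ i * (t : ℂ) * Complex.I)
      (2 * Real.pi * ℓ i * Complex.I) y := by
    simpa using ((Complex.ofRealCLM.hasDerivAt (x := y)).const_mul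
      (2 * Real.pi * ℓ i : ℂ)).mul_const Complex.I
  exact (hlin.cexp.const_mul (u i x : ℂ)).congr_deriv (by push_cast; ring)

theorem prod_exp_two_pi_mul_I {ι : Type*} [Fintype ι] (ℓ : ι → ℝ) (y : ℝ) :
    ∏ i, Complex.exp (2 * Real.pi * ℓ i * y * Complex.I) =
      Complex.exp (2 * Real.pi * (∑ i, ℓ i) * y * Complex.I) := by
  rw [← Complex.exp_sum]
  push_cast
  simp only [Finset.mul_sum, Finset.sum_mul]

theorem det_frame_eq_one_of_horizontal {ℓ : Fin 3 → ℝ} {u : Fin 3 → ℝ → ℝ} {u' : Fin 3 → ℝ}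
    {x c : ℝ} (hc : 0 < c) (hu : ∀ i, HasDerivAt (u i) (u' i) x)
    (hunit : ∀ t, ∑ i, u i t ^ 2 = 1) (hhor : ∀ t, ∑ i, ℓ i * u i t ^ 2 = 0)
    (hsign : 0 ≤ (of ![fun i => u i x, u', fun i => ℓ i * u i x]).det) (hu' : u' ≠ 0)
    (hw : (fun i => c * ℓ i * u i x) ≠ 0) :
    (of ![fun i => u i x, (√(u' ⬝ᵥ u'))⁻¹ • u',
      (√((fun i => c * ℓ i * u i x) ⬝ᵥ (fun i => c * ℓ i * u i x)))⁻¹ •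
        fun i => c * ℓ i * u i x]).det = 1 := by
  refine det_orthonormalized_eq_one ?_ ?_ ?_ ?_ hu' hw ?_
  · simpa [dotProduct, sq] using hunit x
  · simpa [dotProduct] using
      sum_mul_mul_deriv_eq_zero_of_sum_mul_sq_const hu 1 (by simpa using hunit)
  · calc _ = c * ∑ i, ℓ i * u i x ^ 2 := by
          simp only [dotProduct, Finset.mul_sum]
          exact Finset.sum_congr rfl fun i _ => by ring
      _ = 0 := by rw [hhor x, mul_zero]
  · calc _ = c * ∑ i, ℓ i * u i x * u' i := by
          simp only [dotProduct, Finset.mul_sum]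
          exact Finset.sum_congr rfl fun i _ => by ring
      _ = 0 := by rw [sum_mul_mul_deriv_eq_zero_of_sum_mul_sq_const hu ℓ hhor, mul_zero]
  · calc (0 : ℝ) ≤ c * (of ![fun i => u i x, u', fun i => ℓ i * u i x]).det := by positivity
      _ = _ := by
          simp only [det_fin_three, of_apply, cons_val', cons_val_zero, cons_val_one, cons_val,
            cons_val_fin_one]
          ring

theorem det_orbitSurface_frame {ℓ : Fin 3 → ℝ} {u : Fin 3 → ℝ → ℝ} {u' : Fin 3 → ℝ} {x : ℝ}
    (hu : ∀ i, HasDerivAt (u i) (u' i) x) (hunit : ∀ t, ∑ i, u i t ^ 2 = 1)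
    (hhor : ∀ t, ∑ i, ℓ i * u i t ^ 2 = 0)
    (hsign : 0 ≤ (of ![fun i => u i x, u', fun i => ℓ i * u i x]).det) (y : ℝ)
    (hx : pdx (orbitSurface ℓ u) x y ≠ 0) (hy : pdy (orbitSurface ℓ u) x y ≠ 0) :
    (of ![orbitSurface ℓ u x y,
      (hnorm (pdx (orbitSurface ℓ u) x y) : ℂ)⁻¹ • pdx (orbitSurface ℓ u) x y,
      (hnorm (pdy (orbitSurface ℓ u) x y) : ℂ)⁻¹ • pdy (orbitSurface ℓ u) x y]).det =
      Complex.I * Complex.exp (2 * Real.pi * (∑ i, ℓ i) * y * Complex.I) := by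
  set e : Fin 3 → ℂ := fun i => Complex.exp (2 * Real.pi * ℓ i * y * Complex.I)
  set w : Fin 3 → ℝ := fun i => 2 * Real.pi * ℓ i * u i x
  have he : ∀ i, ‖e i‖ = 1 := fun i => norm_exp_two_pi_mul_I (ℓ i) y
  have hIe : ∀ i, ‖Complex.I * e i‖ = 1 := fun i => by simp [he]
  have hr : orbitSurface ℓ u x y = fun i => (u i x : ℂ) * e i := rfl
  have hrx : pdx (orbitSurface ℓ u) x y = fun i => (u' i : ℂ) * e i := pdx_orbitSurface ℓ hu y
  have hry : pdy (orbitSurface ℓ u) x y = fun i => (w i : ℂ) * (Complex.I * e i) :=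
    pdy_orbitSurface ℓ u x y
  have hu'0 : u' ≠ 0 := by
    rintro rfl
    exact hx (by rw [hrx]; ext; simp)
  have hw0 : w ≠ 0 := by
    intro h
    exact hy (by rw [hry, h]; ext; simp)
  rw [hr, hrx, hry, inv_hnorm_smul_ofReal_mul u' he, inv_hnorm_smul_ofReal_mul w hIe,
    det_ofReal_mul_rows,
    det_frame_eq_one_of_horizontal Real.two_pi_pos hu hunit hhor hsign hu'0 hw0,
    prod_exp_two_pi_mul_I]
  simp

noncomputable def mnkProfile (m n k : ℝ) : Fin 3 → ℝ → ℝ :=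
  ![fun x => Real.sin x * √(k / (k - m)), fun x => Real.cos x * √(k / (k - n)),
    fun x => √(n * Real.cos x ^ 2 / (n - k) + m * Real.sin x ^ 2 / (m - k))]

noncomputable def mnkProfileDeriv (m n k x : ℝ) : Fin 3 → ℝ :=
  ![Real.cos x * √(k / (k - m)), -(Real.sin x * √(k / (k - n))),
    Real.sin x * Real.cos x * (m / (m - k) - n / (n - k)) / mnkProfile m n k 2 x]

section MNKProfile

variable {m n k : ℝ}

theorem mnkProfile_two_sq (hm : 0 < m) (hn : 0 < n) (hk : k < 0) (x : ℝ) :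
    mnkProfile m n k 2 x ^ 2 = n * Real.cos x ^ 2 / (n - k) + m * Real.sin x ^ 2 / (m - k) := by
  have hnk : 0 < n - k := by linarith
  have hmk : 0 < m - k := by linarith
  exact Real.sq_sqrt (by positivity)

theorem mnkProfile_two_pos (hm : 0 < m) (hn : 0 < n) (hk : k < 0) (x : ℝ) :
    0 < mnkProfile m n k 2 x := by
  have hnk : 0 < n / (n - k) := div_pos hn (by linarith)
  have hmk : 0 < m / (m - k) := div_pos hm (by linarith)
  refine Real.sqrt_pos.mpr ?_
  have hsplit : n * Real.cos x ^ 2 / (n - k) + m * Real.sin x ^ 2 / (m - k) =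
      n / (n - k) * Real.cos x ^ 2 + m / (m - k) * Real.sin x ^ 2 := by ring
  rw [hsplit]
  have hs := sq_nonneg (Real.sin x)
  have hc := sq_nonneg (Real.cos x)
  have h1 := Real.sin_sq_add_cos_sq x
  rcases le_total (n / (n - k)) (m / (m - k)) with h | h
  · nlinarith [mul_le_mul_of_nonneg_right h hs]
  · nlinarith [mul_le_mul_of_nonneg_right h hc]

theorem sum_mnkProfile_sq (hm : 0 < m) (hn : 0 < n) (hk : k < 0) (x : ℝ) :
    ∑ i, mnkProfile m n k i x ^ 2 = 1 := by
  have hkm : k - m ≠ 0 := by linarith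
  have hkn : k - n ≠ 0 := by linarith
  have hmk : m - k ≠ 0 := by linarith
  have hnk : n - k ≠ 0 := by linarith
  rw [Fin.sum_univ_three, mnkProfile_two_sq hm hn hk]
  simp only [mnkProfile, Matrix.cons_val_zero, Matrix.cons_val_one, mul_pow]
  rw [Real.sq_sqrt (div_nonneg_of_nonpos hk.le (by linarith)),
    Real.sq_sqrt (div_nonneg_of_nonpos hk.le (by linarith))]
  field_simp
  linear_combination (k - m) * (k - n) * (n - k) * (m - k) * Real.sin_sq_add_cos_sq x

theorem sum_mul_mnkProfile_sq (hm : 0 < m) (hn : 0 < n) (hk : k < 0) (x : ℝ) :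
    ∑ i, ![m, n, k] i * mnkProfile m n k i x ^ 2 = 0 := by
  have hkm : k - m ≠ 0 := by linarith
  have hkn : k - n ≠ 0 := by linarith
  have hmk : m - k ≠ 0 := by linarith
  have hnk : n - k ≠ 0 := by linarith
  rw [Fin.sum_univ_three, mnkProfile_two_sq hm hn hk]
  simp only [mnkProfile, Matrix.cons_val_zero, Matrix.cons_val_one, Matrix.cons_val_two,
    Matrix.tail_cons, Matrix.head_cons, mul_pow]
  rw [Real.sq_sqrt (div_nonneg_of_nonpos hk.le (by linarith)),
    Real.sq_sqrt (div_nonneg_of_nonpos hk.le (by linarith))]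
  field_simp
  ring

theorem hasDerivAt_mnkProfile (hm : 0 < m) (hn : 0 < n) (hk : k < 0) (x : ℝ) (i : Fin 3) :
    HasDerivAt (mnkProfile m n k i) (mnkProfileDeriv m n k x i) x := by
  fin_cases i
  · exact (Real.hasDerivAt_sin x).mul_const _
  · exact ((Real.hasDerivAt_cos x).mul_const _).congr_deriv (by simp [mnkProfileDeriv])
  · have hf : HasDerivAt (fun t => n * Real.cos t ^ 2 / (n - k) + m * Real.sin t ^ 2 / (m - k))
        (2 * Real.sin x * Real.cos x * (m / (m - k) - n / (n - k))) x := by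
      refine ((((Real.hasDerivAt_cos x).fun_pow 2).const_mul n).div_const (n - k) |>.add
        ((((Real.hasDerivAt_sin x).fun_pow 2).const_mul m).div_const (m - k))).congr_deriv ?_
      ring
    have hradicand : n * Real.cos x ^ 2 / (n - k) + m * Real.sin x ^ 2 / (m - k) ≠ 0 :=
      (Real.sqrt_pos.mp (mnkProfile_two_pos hm hn hk x)).ne'
    refine (hf.sqrt hradicand).congr_deriv ?_
    change _ = Real.sin x * Real.cos x * (m / (m - k) - n / (n - k)) /
      √(n * Real.cos x ^ 2 / (n - k) + m * Real.sin x ^ 2 / (m - k))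
    ring

theorem det_mnkProfile_nonneg (hm : 0 < m) (hn : 0 < n) (hk : k < 0) (x : ℝ) :
    0 ≤ (of ![fun i => mnkProfile m n k i x, mnkProfileDeriv m n k x,
      fun i => ![m, n, k] i * mnkProfile m n k i x]).det := by
  have hmk : 0 < m - k := by linarith
  have hnk : 0 < n - k := by linarith
  set s := Real.sin x
  set c := Real.cos x
  set a := √(k / (k - m))
  set b := √(k / (k - n))
  set g := mnkProfile m n k 2 x
  set dl := m / (m - k) - n / (n - k) with hdl_def
  have hg : 0 < g := mnkProfile_two_pos hm hn hk x
  have hp : (fun i => mnkProfile m n k i x) = ![s * a, c * b, g] := by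
    ext i; fin_cases i <;> rfl
  have hu' : mnkProfileDeriv m n k x = ![c * a, -(s * b), s * c * dl / g] := rfl
  have hw : (fun i => ![m, n, k] i * mnkProfile m n k i x) =
      ![m * (s * a), n * (c * b), k * g] := by
    ext i; fin_cases i <;> rfl
  have hdet : (of ![![s * a, c * b, g], ![c * a, -(s * b), s * c * dl / g],
      ![m * (s * a), n * (c * b), k * g]]).det * g =
      a * b * (g ^ 2 * (n * c ^ 2 + m * s ^ 2 - k * (s ^ 2 + c ^ 2))
        + s ^ 2 * c ^ 2 * (dl * (m - n))) := by
    simp only [det_fin_three, of_apply, cons_val', cons_val_zero, cons_val_one, cons_val,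
      cons_val_fin_one]
    field_simp
    ring
  have hdl : dl * (m - n) = -k * (m - n) ^ 2 / ((m - k) * (n - k)) := by
    rw [hdl_def]
    field_simp
    ring
  rw [hp, hu', hw]
  refine (mul_nonneg_iff_of_pos_right hg).mp (hdet ▸ ?_)
  have hquad : 0 ≤ n * c ^ 2 + m * s ^ 2 - k * (s ^ 2 + c ^ 2) := by
    have : k * (s ^ 2 + c ^ 2) ≤ 0 := mul_nonpos_of_nonpos_of_nonneg hk.le (by positivity)
    have : 0 ≤ n * c ^ 2 + m * s ^ 2 := by positivity
    linarith
  have hcross : 0 ≤ dl * (m - n) := by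
    rw [hdl]
    exact div_nonneg (mul_nonneg (by linarith) (sq_nonneg _)) (by positivity)
  exact mul_nonneg (mul_nonneg (Real.sqrt_nonneg _) (Real.sqrt_nonneg _))
    (add_nonneg (mul_nonneg (sq_nonneg g) hquad) (mul_nonneg (by positivity) hcross))

end MNKProfile

/-- The Lagrangian angle of `Σ_{m,n,k}` satisfies `e^{iβ} = i·e^{2πi(m+n+k)y}`:
the determinant of the matrix with rows `r`, `r_x/|r_x|`, `r_y/|r_y|` equals
`i·e^{2πi(m+n+k)y}`. -/
theorem mnk_lagrangian_angle
    (m n k : ℤ) (hmn : n ≤ m) (hn : 0 < n) (hk : k < 0)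
    (u1 u2 u3 : ℝ → ℝ)
    (hu1 : ∀ x, u1 x = Real.sin x * Real.sqrt ((k : ℝ) / ((k : ℝ) - (m : ℝ))))
    (hu2 : ∀ x, u2 x = Real.cos x * Real.sqrt ((k : ℝ) / ((k : ℝ) - (n : ℝ))))
    (hu3 : ∀ x, u3 x = Real.sqrt ((n : ℝ) * (Real.cos x)^2 / ((n : ℝ) - (k : ℝ))
      + (m : ℝ) * (Real.sin x)^2 / ((m : ℝ) - (k : ℝ))))
    (r : ℝ → ℝ → Fin 3 → ℂ)
    (hr : ∀ x y, r x y =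
      ![(u1 x : ℂ) * Complex.exp (2 * Real.pi * (m : ℝ) * y * Complex.I),
        (u2 x : ℂ) * Complex.exp (2 * Real.pi * (n : ℝ) * y * Complex.I),
        (u3 x : ℂ) * Complex.exp (2 * Real.pi * (k : ℝ) * y * Complex.I)]) :
    ∀ x y, pdx r x y ≠ 0 → pdy r x y ≠ 0 →
      Matrix.det (Matrix.of ![r x y,
          ((hnorm (pdx r x y) : ℂ))⁻¹ • pdx r x y,
          ((hnorm (pdy r x y) : ℂ))⁻¹ • pdy r x y]) =
        Complex.I * Complex.exp (2 * Real.pi * ((m : ℝ) + (n : ℝ) + (k : ℝ)) * y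
          * Complex.I) := by
  intro x y hx hy
  have hm' : (0 : ℝ) < m := by exact_mod_cast hn.trans_le hmn
  have hn' : (0 : ℝ) < n := by exact_mod_cast hn
  have hk' : (k : ℝ) < 0 := by exact_mod_cast hk
  obtain rfl : r = orbitSurface ![(m : ℝ), n, k] (mnkProfile m n k) := by
    ext x' y' i
    fin_cases i <;> simp [hr, orbitSurface, mnkProfile, hu1, hu2, hu3]
  convert det_orbitSurface_frame (hasDerivAt_mnkProfile hm' hn' hk' x)
    (sum_mnkProfile_sq hm' hn' hk') (sum_mul_mnkProfile_sq hm' hn' hk')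
    (det_mnkProfile_nonneg hm' hn' hk' x) y hx hy using 4
  simp [Fin.sum_univ_three]
end
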